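/- arXiv:2512.07225 — 6 statements merged into one kernel-verified Lean document; each statement's English description precedes it below -/
import Mathlib

section
/- Let b, μ₁, μ₂, a > 0 and suppose N := b/μ₁ > 1 and a < a_crit := Q(√N − 1)², where Q := μ₁/μ₂. Then the equation b·x/(x+a) − μ₁ − μ₂x = 0 has exactly two positive solutions x₋ < x₊, given by x₊/₋ = (Q/2)(N − 1 − a/Q)(1 ± √(1 − 4a/(Q(N − 1 − a/Q)²))). -/
/-- If `N = b/μ₁ > 1` and `a < a_crit = Q(√N - 1)²`, the equation
`b x/(x+a) - μ₁ - μ₂ x = 0` has exactly two positive solutions `x₋ < x₊`,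
given by explicit formulas. -/
theorem stmt1 (b μ1 μ2 a : ℝ) (hb : 0 < b) (hμ1 : 0 < μ1) (hμ2 : 0 < μ2) (ha : 0 < a)
    (hN : 1 < b / μ1) (hacrit : a < (μ1 / μ2) * (Real.sqrt (b / μ1) - 1) ^ 2) :
    ∃ xm xp : ℝ,
      xm = (μ1 / μ2) / 2 * (b / μ1 - 1 - a / (μ1 / μ2)) *
        (1 - Real.sqrt (1 - 4 * a / ((μ1 / μ2) * (b / μ1 - 1 - a / (μ1 / μ2)) ^ 2))) ∧
      xp = (μ1 / μ2) / 2 * (b / μ1 - 1 - a / (μ1 / μ2)) *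
        (1 + Real.sqrt (1 - 4 * a / ((μ1 / μ2) * (b / μ1 - 1 - a / (μ1 / μ2)) ^ 2))) ∧
      0 < xm ∧ xm < xp ∧
      ∀ x : ℝ, 0 < x → (b * x / (x + a) - μ1 - μ2 * x = 0 ↔ x = xm ∨ x = xp) := by
  set Q : ℝ := μ1 / μ2 with hQdef
  set N : ℝ := b / μ1 with hNdef
  have hQ0 : 0 < Q := div_pos hμ1 hμ2
  have hN0 : (0:ℝ) < N := lt_trans one_pos hN
  have hNsq : Real.sqrt N ^ 2 = N := Real.sq_sqrt hN0.le
  have hsN : 1 < Real.sqrt N := by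
    have : Real.sqrt 1 < Real.sqrt N := Real.sqrt_lt_sqrt (by norm_num) hN
    simpa using this
  set S : ℝ := Q * (N - 1) - a with hSdef
  clear_value Q N
  have hS0 : 0 < S := by nlinarith [hsN, hNsq, hacrit, hQ0, ha]
  have h1 : 0 < Q * (Real.sqrt N - 1) ^ 2 - a := by linarith
  have h2 : 0 < Q * (Real.sqrt N + 1) ^ 2 - a := by nlinarith [hsN]
  have hid : (Q * (N - 1) - a) ^ 2 - 4 * Q * a
      = (Q * (Real.sqrt N - 1) ^ 2 - a) * (Q * (Real.sqrt N + 1) ^ 2 - a) := by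
    linear_combination (2 * a * Q - Q ^ 2 * (Real.sqrt N ^ 2 + N - 2)) * hNsq
  have hD0 : 0 < S ^ 2 - 4 * Q * a := by
    rw [hSdef, hid]; exact mul_pos h1 h2
  set s : ℝ := Real.sqrt (S ^ 2 - 4 * Q * a) with hsdef
  have hs2 : s ^ 2 = S ^ 2 - 4 * Q * a := Real.sq_sqrt hD0.le
  have hs0 : 0 < s := Real.sqrt_pos.mpr hD0
  clear_value S s
  have hsS : s < S := by nlinarith [hs2, hs0]
  -- relating the stated formula to (S ∓ s)/2
  have hT' : N - 1 - a / Q = S / Q := by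
    rw [hSdef]; field_simp
  have hin : 1 - 4 * a / (Q * (N - 1 - a / Q) ^ 2) = (S ^ 2 - 4 * Q * a) / S ^ 2 := by
    rw [hT']
    field_simp
  have hsq : Real.sqrt (1 - 4 * a / (Q * (N - 1 - a / Q) ^ 2)) = s / S := by
    rw [hin, hsdef, Real.sqrt_div hD0.le, Real.sqrt_sq hS0.le]
  have hxm : Q / 2 * (N - 1 - a / Q) * (1 - Real.sqrt (1 - 4 * a / (Q * (N - 1 - a / Q) ^ 2)))
      = (S - s) / 2 := by
    rw [hsq, hT']
    field_simp
  have hxp : Q / 2 * (N - 1 - a / Q) * (1 + Real.sqrt (1 - 4 * a / (Q * (N - 1 - a / Q) ^ 2)))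
      = (S + s) / 2 := by
    rw [hsq, hT']
    field_simp
  refine ⟨(S - s) / 2, (S + s) / 2, hxm.symm, hxp.symm, by linarith, by linarith, ?_⟩
  intro x hx
  have hxa : (0:ℝ) < x + a := by linarith
  have hcoef : μ2 * S = b - μ1 - μ2 * a := by
    rw [hSdef, hQdef, hNdef]; field_simp
  have hQa : μ2 * (Q * a) = μ1 * a := by
    rw [hQdef]; field_simp
  have key : ∀ y : ℝ, (y - (S - s) / 2) * (y - (S + s) / 2) = y ^ 2 - S * y + Q * a := by
    intro y; linear_combination (-(1:ℝ)/4) * hs2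
  have hpoly : μ2 * ((x - (S - s) / 2) * (x - (S + s) / 2))
      = (μ1 + μ2 * x) * (x + a) - b * x := by
    rw [key]
    linear_combination (-x) * hcoef + hQa
  have hrw : b * x / (x + a) - μ1 - μ2 * x
      = (b * x - (μ1 + μ2 * x) * (x + a)) / (x + a) := by
    field_simp
    ring
  rw [hrw, div_eq_zero_iff]
  constructor
  · rintro (h | h)
    · have h0 : μ2 * ((x - (S - s) / 2) * (x - (S + s) / 2)) = 0 := by
        rw [hpoly]; linarith
      have h0' : (x - (S - s) / 2) * (x - (S + s) / 2) = 0 :=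
        (mul_eq_zero.mp h0).resolve_left hμ2.ne'
      rcases mul_eq_zero.mp h0' with h | h
      · exact Or.inl (by linarith)
      · exact Or.inr (by linarith)
    · exact absurd h hxa.ne'
  · rintro (h | h)
    · left
      have h0 : (x - (S - s) / 2) * (x - (S + s) / 2) = 0 := by rw [h]; ring
      linear_combination hpoly - μ2 * h0
    · left
      have h0 : (x - (S - s) / 2) * (x - (S + s) / 2) = 0 := by rw [h]; ring
      linear_combination hpoly - μ2 * h0
end

section
/- Let b, μ₁, μ₂, a > 0 with N := b/μ₁ > 1 and a = a_crit := Q(√N − 1)² where Q := μ₁/μ₂. Then the equation b·x/(x+a) − μ₁ − μ₂x = 0 has exactly one positive solution, namely x* = Q(√N − 1). -/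
/-- If `N = b/μ₁ > 1` and `a = a_crit = Q(√N - 1)²`, the equation
`b x/(x+a) - μ₁ - μ₂ x = 0` has exactly one positive solution `x* = Q(√N - 1)`. -/
theorem stmt2 (b μ1 μ2 a : ℝ) (hb : 0 < b) (hμ1 : 0 < μ1) (hμ2 : 0 < μ2) (ha : 0 < a)
    (hN : 1 < b / μ1) (hacrit : a = (μ1 / μ2) * (Real.sqrt (b / μ1) - 1) ^ 2) :
    0 < (μ1 / μ2) * (Real.sqrt (b / μ1) - 1) ∧
    ∀ x : ℝ, 0 < x →
      (b * x / (x + a) - μ1 - μ2 * x = 0 ↔ x = (μ1 / μ2) * (Real.sqrt (b / μ1) - 1)) := by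
  set s := Real.sqrt (b / μ1) with hs
  have hs2 : s ^ 2 = b / μ1 := Real.sq_sqrt (le_of_lt (by positivity))
  have hs1 : 1 < s := by
    rw [hs, show (1:ℝ) = Real.sqrt 1 by simp]
    exact Real.sqrt_lt_sqrt (by norm_num) hN
  have hb' : b = μ1 * s ^ 2 := by
    field_simp at hs2; linarith
  have hxstar : 0 < (μ1 / μ2) * (s - 1) := by
    have : 0 < s - 1 := by linarith
    positivity
  refine ⟨hxstar, fun x hx => ?_⟩
  have hxa : 0 < x + a := by linarith
  have key : b * x / (x + a) - μ1 - μ2 * x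
      = -(μ2 * (x - (μ1 / μ2) * (s - 1)) ^ 2) / (x + a) := by
    rw [hacrit, hb'] at *
    field_simp
    ring
  rw [key]
  constructor
  · intro h
    have h2 : μ2 * (x - (μ1 / μ2) * (s - 1)) ^ 2 = 0 :=
      neg_eq_zero.mp ((div_eq_zero_iff.mp h).resolve_right (ne_of_gt hxa))
    have h3 : (x - (μ1 / μ2) * (s - 1)) ^ 2 = 0 := by
      rcases mul_eq_zero.mp h2 with h | h
      · exact absurd h (ne_of_gt hμ2)
      · exact h
    have := pow_eq_zero_iff (n := 2) (by norm_num) |>.mp h3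
    linarith
  · intro h
    rw [h]
    simp
end

section
/- Let b, μ₁, μ₂, a > 0 with N := b/μ₁ > 1 and a > a_crit := Q(√N − 1)² where Q := μ₁/μ₂. Then the function g(x) = b·x/(x+a) − μ₁ − μ₂x is strictly negative for all x > 0. -/
/-- If `N = b/μ₁ > 1` and `a > a_crit = Q(√N - 1)²`, then
`g(x) = b x/(x+a) - μ₁ - μ₂ x < 0` for all `x > 0`. -/
theorem stmt3 (b μ1 μ2 a : ℝ) (hb : 0 < b) (hμ1 : 0 < μ1) (hμ2 : 0 < μ2) (ha : 0 < a)
    (hN : 1 < b / μ1) (hacrit : (μ1 / μ2) * (Real.sqrt (b / μ1) - 1) ^ 2 < a) :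
    ∀ x : ℝ, 0 < x → b * x / (x + a) - μ1 - μ2 * x < 0 := by
  intro x hx
  set r := Real.sqrt (b / μ1) with hr
  have hr2 : r ^ 2 = b / μ1 := Real.sq_sqrt (by positivity)
  have hr1 : 1 < r := by
    have := Real.lt_sqrt (x := 1) (y := b / μ1) (by norm_num)
    simpa [hr] using this.mpr (by linarith)
  have hbr : b = μ1 * r ^ 2 := by field_simp at hr2; linarith [hr2]
  have hkey : μ1 * (r - 1) ^ 2 < μ2 * a := by
    rw [div_mul_eq_mul_div, div_lt_iff₀ hμ2] at hacrit
    linarith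
  set u := Real.sqrt μ2 with hu
  set v := Real.sqrt (μ1 * a) with hv
  have hu2 : u ^ 2 = μ2 := Real.sq_sqrt hμ2.le
  have hv2 : v ^ 2 = μ1 * a := Real.sq_sqrt (by positivity)
  have hu0 : 0 < u := Real.sqrt_pos.mpr hμ2
  have hv0 : 0 < v := Real.sqrt_pos.mpr (by positivity)
  have huv2 : (u * v) ^ 2 = μ2 * (μ1 * a) := by rw [mul_pow, hu2, hv2]
  have huv : μ1 * (r - 1) < u * v := by
    nlinarith [mul_pos hu0 hv0, mul_pos hμ1 (mul_pos hu0 hv0), mul_lt_mul_of_pos_left hkey hμ1]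
  have hxa : 0 < x + a := by linarith
  have hamgm : 2 * (u * v) * x ≤ μ2 * x ^ 2 + μ1 * a := by
    have h1 : μ2 * x ^ 2 + μ1 * a - 2 * (u * v) * x = (u * x - v) ^ 2 := by
      rw [← hu2, ← hv2]; ring
    nlinarith [sq_nonneg (u * x - v)]
  have hquad : b * x < (μ1 + μ2 * x) * (x + a) := by
    nlinarith [hamgm, mul_lt_mul_of_pos_right huv hx, mul_lt_mul_of_pos_right hkey hx]
  have : b * x / (x + a) < μ1 + μ2 * x := (div_lt_iff₀ hxa).mpr hquad
  linarith
end

section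
/- Let D be an n×n irreducible Metzler matrix with zero column sums and μ ∈ ℝⁿ with all μᵢ > 0. Then for J := D − diag(μ), the inverse satisfies −J⁻¹ ≫ 0, i.e. every entry of −J⁻¹ is strictly positive. Consequently, for any Λ > 0 (nonnegative, nonzero), the unique solution x* of J x* = −Λ has all components strictly positive. -/
/-!
Put `M := diag(μ) - D = -J`. Its off-diagonal entries are `≤ 0` and, because the columns of `D`
sum to zero, its column sums are the `μ j > 0`. A minimum principle follows: if `xᵀ M ≥ 0` then
`x ≥ 0`, since at an index `j` minimising `x` we get `(xᵀ M)_j ≤ x_j · ∑ᵢ M i j`. Hence `M` is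
invertible, and each row `x` of `M⁻¹`, which satisfies `xᵀ M = eᵢᵀ ≥ 0`, is nonnegative. Looking at
`(xᵀ M)_j ≥ 0` with `x_j = 0` shows that the zero set of `x` is closed under the edges `j → i` of
`D`, so by irreducibility it is empty: `M⁻¹ = -J⁻¹ ≫ 0`, and then `x* = M⁻¹ Λ ≫ 0`.
-/

open Finset Relation

namespace Matrix

variable {ι : Type*}

section ZMatrix

variable [Fintype ι] {M : Matrix ι ι ℝ}

theorem nonneg_of_nonneg_vecMul (hoff : ∀ i j, i ≠ j → M i j ≤ 0)
    (hcol : ∀ j, 0 < ∑ i, M i j) {x : ι → ℝ} (hx : 0 ≤ x ᵥ* M) : 0 ≤ x := by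
  by_contra hneg
  obtain ⟨i₁, hi₁⟩ : ∃ i, x i < 0 := by simpa [Pi.le_def] using hneg
  obtain ⟨j, -, hmin⟩ := exists_min_image univ x ⟨i₁, mem_univ _⟩
  have hxj : x j < 0 := (hmin i₁ (mem_univ _)).trans_lt hi₁
  have hle : (x ᵥ* M) j ≤ x j * ∑ i, M i j := by
    rw [vecMul, dotProduct, mul_sum]
    refine sum_le_sum fun i _ => ?_
    rcases eq_or_ne i j with rfl | hij
    · rfl
    · exact mul_le_mul_of_nonpos_right (hmin i (mem_univ _)) (hoff i j hij)
  have hxM : 0 ≤ (x ᵥ* M) j := hx j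
  linarith [mul_neg_of_neg_of_pos hxj (hcol j)]

theorem eq_zero_of_nonneg_vecMul_of_eq_zero (hoff : ∀ i j, i ≠ j → M i j ≤ 0)
    {x : ι → ℝ} (hx : 0 ≤ x) {i j : ι} (hb : 0 ≤ (x ᵥ* M) j) (hxj : x j = 0)
    (hij : M i j < 0) : x i = 0 := by
  have hle : (x ᵥ* M) j ≤ x i * M i j := by
    classical
    rw [vecMul, dotProduct, ← add_sum_erase _ _ (mem_univ i), add_le_iff_nonpos_right]
    refine sum_nonpos fun k _ => ?_
    rcases eq_or_ne k j with rfl | hkj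
    · simp [hxj]
    · exact mul_nonpos_of_nonneg_of_nonpos (hx k) (hoff k j hkj)
  exact le_antisymm (nonpos_of_mul_nonneg_left (hb.trans hle) hij) (hx i)

theorem pos_of_nonneg_vecMul (hoff : ∀ i j, i ≠ j → M i j ≤ 0)
    (hcol : ∀ j, 0 < ∑ i, M i j)
    (hirr : ∀ i j, i ≠ j → TransGen (fun p q => M q p < 0) i j)
    {x : ι → ℝ} (hb : 0 ≤ x ᵥ* M) (hb₀ : x ᵥ* M ≠ 0) (i : ι) : 0 < x i := by
  have hx := nonneg_of_nonneg_vecMul hoff hcol hb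
  refine (hx i).lt_of_ne' fun hxi => hb₀ ?_
  have hreach : ∀ j, TransGen (fun p q => M q p < 0) i j → x j = 0 := by
    intro j hij
    induction hij with
    | single h => exact eq_zero_of_nonneg_vecMul_of_eq_zero hoff hx (hb _) hxi h
    | tail _ h ih => exact eq_zero_of_nonneg_vecMul_of_eq_zero hoff hx (hb _) ih h
  have hzero : x = 0 := funext fun j =>
    (eq_or_ne i j).elim (· ▸ hxi) fun hij => hreach j (hirr i j hij)
  rw [hzero, zero_vecMul]

theorem mulVec_apply_pos {A : Matrix ι ι ℝ} (hA : ∀ i j, 0 < A i j) {v : ι → ℝ}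
    (hv : 0 ≤ v) (hv₀ : v ≠ 0) (i : ι) : 0 < (A *ᵥ v) i := by
  obtain ⟨j, hj⟩ := Function.ne_iff.mp hv₀
  exact sum_pos' (fun k _ => mul_nonneg (hA i k).le (hv k))
    ⟨j, mem_univ _, mul_pos (hA i j) ((hv j).lt_of_ne' hj)⟩

variable [DecidableEq ι]

theorem isUnit_of_offDiag_nonpos_of_sum_col_pos (hoff : ∀ i j, i ≠ j → M i j ≤ 0)
    (hcol : ∀ j, 0 < ∑ i, M i j) : IsUnit M := by
  rw [← vecMul_injective_iff_isUnit]
  intro x y (hxy : x ᵥ* M = y ᵥ* M)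
  have hker : (x - y) ᵥ* M = 0 := by rw [sub_vecMul, hxy, sub_self]
  have h₁ := nonneg_of_nonneg_vecMul hoff hcol hker.ge
  have h₂ := nonneg_of_nonneg_vecMul hoff hcol (x := -(x - y)) (by rw [neg_vecMul, hker, neg_zero])
  exact sub_eq_zero.mp (le_antisymm (neg_nonneg.mp h₂) h₁)

theorem inv_apply_pos (hoff : ∀ i j, i ≠ j → M i j ≤ 0) (hcol : ∀ j, 0 < ∑ i, M i j)
    (hirr : ∀ i j, i ≠ j → TransGen (fun p q => M q p < 0) i j) (i j : ι) :
    0 < M⁻¹ i j := by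
  have hdet := (isUnit_iff_isUnit_det M).mp (isUnit_of_offDiag_nonpos_of_sum_col_pos hoff hcol)
  have hrow : M⁻¹ i ᵥ* M = Pi.single i 1 := by
    rw [← mul_apply_eq_vecMul, nonsing_inv_mul M hdet]
    ext k
    simp [one_apply, Pi.single_apply, eq_comm]
  refine pos_of_nonneg_vecMul hoff hcol hirr ?_ ?_ j
  · rw [hrow]; exact Pi.single_nonneg.mpr zero_le_one
  · rw [hrow]; exact Pi.single_ne_zero_iff.mpr one_ne_zero

end ZMatrix

section Inverse

variable [Fintype ι] [DecidableEq ι] {R : Type*} [CommRing R] {A : Matrix ι ι R}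

theorem eq_inv_mulVec_of_mulVec_eq (hA : IsUnit A) {x b : ι → R} (h : A *ᵥ x = b) :
    x = A⁻¹ *ᵥ b := by
  rw [← h, mulVec_mulVec, nonsing_inv_mul _ ((isUnit_iff_isUnit_det A).mp hA), one_mulVec]

theorem inv_neg_of_isUnit (hA : IsUnit A) : (-A)⁻¹ = -A⁻¹ :=
  inv_eq_left_inv <| by rw [neg_mul_neg, nonsing_inv_mul _ ((isUnit_iff_isUnit_det A).mp hA)]

end Inverse

section DiagonalSub

variable [DecidableEq ι] {μ : ι → ℝ} {D : Matrix ι ι ℝ}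

theorem sum_diagonal_sub_apply [Fintype ι] (hD : ∀ j, ∑ i, D i j = 0) (j : ι) :
    ∑ i, (diagonal μ - D) i j = μ j := by
  simp [sum_sub_distrib, hD, diagonal_apply]

theorem transGen_diagonal_sub_neg (hdiag : ∀ j, D j j ≤ 0)
    (hirr : ∀ i j, i ≠ j → TransGen (fun p q => 0 < D q p) i j) (i j : ι) (hij : i ≠ j) :
    TransGen (fun p q => (diagonal μ - D) q p < 0) i j := by
  refine TransGen.mono (fun p q hpq => ?_) i j (hirr i j hij)
  have hqp : q ≠ p := by rintro rfl; exact (hdiag q).not_gt hpq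
  simpa [diagonal_apply_ne _ hqp] using hpq

end DiagonalSub

end Matrix

open Matrix

/-- If `D` is an irreducible Metzler matrix with zero column sums and `μ ≫ 0`, then
for `J = D - diag(μ)`, `-J⁻¹` is entrywise strictly positive; consequently, for any
nonnegative nonzero `Λ`, the unique solution of `J x = -Λ` is strictly positive. -/
theorem stmt9 {n : ℕ} (D : Matrix (Fin n) (Fin n) ℝ) (μ : Fin n → ℝ)
    (hmetz : ∀ i j, i ≠ j → 0 ≤ D i j)
    (hcol : ∀ j, D j j = -∑ i ∈ Finset.univ.erase j, D i j)
    (hirr : ∀ i j : Fin n, i ≠ j → Relation.TransGen (fun p q : Fin n => 0 < D q p) i j)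
    (hμ : ∀ i, 0 < μ i)
    (J : Matrix (Fin n) (Fin n) ℝ) (hJ : J = D - Matrix.diagonal μ) :
    IsUnit J ∧
    (∀ i j, 0 < -(J⁻¹ i j)) ∧
    ∀ Λ : Fin n → ℝ, (∀ i, 0 ≤ Λ i) → Λ ≠ 0 →
      (∃! x : Fin n → ℝ, J.mulVec x = -Λ) ∧
      ∀ x : Fin n → ℝ, J.mulVec x = -Λ → ∀ i, 0 < x i := by
  set M := diagonal μ - D with hM
  have hoff : ∀ i j, i ≠ j → M i j ≤ 0 := fun i j hij => by
    simpa [hM, diagonal_apply_ne _ hij] using hmetz i j hij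
  have hDcol : ∀ j, ∑ i, D i j = 0 := fun j => by
    rw [← add_sum_erase _ _ (mem_univ j), hcol j, neg_add_cancel]
  have hsum : ∀ j, 0 < ∑ i, M i j := fun j => by
    rw [sum_diagonal_sub_apply hDcol j]; exact hμ j
  have hdiag : ∀ j, D j j ≤ 0 := fun j => by
    rw [hcol j]; exact neg_nonpos.mpr (sum_nonneg fun i hi => hmetz i j (ne_of_mem_erase hi))
  have hirrM := transGen_diagonal_sub_neg (μ := μ) hdiag hirr
  have hMunit := isUnit_of_offDiag_nonpos_of_sum_col_pos hoff hsum
  have hJM : J = -M := by rw [hJ, hM, neg_sub]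
  have hJunit : IsUnit J := hJM ▸ hMunit.neg
  have hJinv : J⁻¹ = -M⁻¹ := hJM ▸ inv_neg_of_isUnit hMunit
  refine ⟨hJunit, fun i j => ?_, fun Λ hΛ hΛ₀ => ⟨?_, fun x hx => ?_⟩⟩
  · simpa [hJinv] using inv_apply_pos hoff hsum hirrM i j
  · exact (Function.bijective_iff_existsUnique _).mp
      ⟨mulVec_injective_iff_isUnit.mpr hJunit, mulVec_surjective_iff_isUnit.mpr hJunit⟩ (-Λ)
  · rw [eq_inv_mulVec_of_mulVec_eq hJunit hx, hJinv, neg_mulVec, mulVec_neg, neg_neg]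
    exact mulVec_apply_pos (inv_apply_pos hoff hsum hirrM) hΛ hΛ₀
end

section
/- Let f : ℝⁿ → ℝⁿ be continuously differentiable with Metzler Jacobian everywhere (cooperative system) on a positively invariant p-convex open set G. If x' ∈ G satisfies f(x') ≥ 0 componentwise, then the solution t ↦ x(t, x') of x' = f(x) with initial condition x' is non-decreasing in time: for all 0 ≤ s ≤ t, x(s, x') ≤ x(t, x') componentwise. -/
/-- For a cooperative (Metzler Jacobian) C¹ vector field on a positively invariant
p-convex open set `G`, a solution starting at `x'` with `f(x') ≥ 0` is non-decreasing
in time. -/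
theorem stmt13 {n : ℕ} (G : Set (Fin n → ℝ)) (hG : IsOpen G)
    (hpconv : ∀ y ∈ G, ∀ z ∈ G, (∀ i, y i ≤ z i) →
      ∀ τ ∈ Set.Icc (0 : ℝ) 1, (fun i => (1 - τ) * y i + τ * z i) ∈ G)
    (f : (Fin n → ℝ) → (Fin n → ℝ))
    (f' : (Fin n → ℝ) → ((Fin n → ℝ) →L[ℝ] (Fin n → ℝ)))
    (hderiv : ∀ p ∈ G, HasFDerivAt f (f' p) p)
    (hcont : ContinuousOn f' G)
    (hmetz : ∀ p ∈ G, ∀ i j, i ≠ j → 0 ≤ f' p (Pi.single j 1) i)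
    (x0 : Fin n → ℝ) (hx0 : x0 ∈ G) (hf0 : ∀ i, 0 ≤ f x0 i)
    (x : ℝ → (Fin n → ℝ)) (hinit : x 0 = x0)
    (hsol : ∀ t, 0 ≤ t → HasDerivAt x (f (x t)) t)
    (hinv : ∀ t, 0 ≤ t → x t ∈ G) :
    ∀ s t : ℝ, 0 ≤ s → s ≤ t → ∀ i, x s i ≤ x t i := by
  have key : ∀ T : ℝ, 0 ≤ T → ∀ i, 0 ≤ f (x T) i := by
    intro T hT
    set I : Set ℝ := Set.Icc 0 T with hI
    have hIc : IsCompact I := isCompact_Icc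
    have hxcontAt : ∀ t ∈ I, ContinuousAt x t := fun t ht => (hsol t ht.1).continuousAt
    have hxcont : ContinuousOn x I := fun t ht => (hxcontAt t ht).continuousWithinAt
    set v : ℝ → Fin n → ℝ := fun t => f (x t) with hvdef
    have hvderiv : ∀ t ∈ I, HasDerivAt v (f' (x t) (v t)) t := fun t ht =>
      (hderiv _ (hinv t ht.1)).comp_hasDerivAt t (hsol t ht.1)
    have hvcontAt : ∀ t ∈ I, ContinuousAt v t := fun t ht => (hvderiv t ht).continuousAt
    obtain ⟨L, hL0, hLb⟩ : ∃ L, 0 ≤ L ∧ ∀ t ∈ I, ‖f' (x t)‖ ≤ L := by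
      have hc : ContinuousOn (fun t => ‖f' (x t)‖) I :=
        (hcont.comp hxcont (fun t ht => hinv t ht.1)).norm
      obtain ⟨t₁, ht₁, hmax⟩ := hIc.exists_isMaxOn ⟨0, Set.left_mem_Icc.2 hT⟩ hc
      exact ⟨max (‖f' (x t₁)‖) 0, le_max_right _ _,
        fun t ht => le_max_of_le_left (hmax ht)⟩
    have hentry : ∀ t ∈ I, ∀ i j, |f' (x t) (Pi.single j 1) i| ≤ L := by
      intro t ht i j
      have h1 : ‖(Pi.single j 1 : Fin n → ℝ)‖ ≤ 1 := by
        rw [pi_norm_le_iff_of_nonneg zero_le_one]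
        intro k
        rcases eq_or_ne k j with rfl | hk
        · simp
        · simp [Pi.single_eq_of_ne hk]
      calc |f' (x t) (Pi.single j 1) i| = ‖f' (x t) (Pi.single j 1) i‖ :=
            (Real.norm_eq_abs _).symm
        _ ≤ ‖f' (x t) (Pi.single j 1)‖ := norm_le_pi_norm _ i
        _ ≤ ‖f' (x t)‖ * ‖(Pi.single j 1 : Fin n → ℝ)‖ := (f' (x t)).le_opNorm _
        _ ≤ L * 1 := mul_le_mul (hLb t ht) h1 (norm_nonneg _) hL0
        _ = L := mul_one L
    set C : ℝ := n * L + 1 with hC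
    have hCpos : 0 < C := by positivity
    have zpos : ∀ ε > (0:ℝ), ∀ t ∈ I, ∀ i, 0 < v t i + ε * Real.exp (C * t) := by
      intro ε hε
      by_contra hcon
      push_neg at hcon
      obtain ⟨tb, htb, ib, hib⟩ := hcon
      set B : Set ℝ :=
        ⋃ i, (I ∩ (fun t => v t i + ε * Real.exp (C * t)) ⁻¹' Set.Iic 0) with hB
      have hBne : B.Nonempty := ⟨tb, Set.mem_iUnion.2 ⟨ib, htb, hib⟩⟩
      have hBclosed : IsClosed B := by
        refine isClosed_iUnion_of_finite fun i => ?_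
        refine ContinuousOn.preimage_isClosed_of_isClosed ?_ isClosed_Icc isClosed_Iic
        intro t ht
        exact (((continuous_apply i).continuousAt.comp (hvcontAt t ht)).add
          (by fun_prop)).continuousWithinAt
      have hBsub : B ⊆ I := by
        intro t ht; rcases Set.mem_iUnion.1 ht with ⟨i, hi⟩; exact hi.1
      have hBbdd : BddBelow B := ⟨0, fun t ht => (hBsub ht).1⟩
      set t₀ : ℝ := sInf B with ht₀def
      have ht₀B : t₀ ∈ B := hBclosed.csInf_mem hBne hBbdd
      obtain ⟨i, hmem⟩ := Set.mem_iUnion.1 ht₀B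
      have ht₀I : t₀ ∈ I := hmem.1
      have hi0 : v t₀ i + ε * Real.exp (C * t₀) ≤ 0 := hmem.2
      have ht₀pos : 0 < t₀ := by
        rcases lt_or_eq_of_le ht₀I.1 with h | h
        · exact h
        · exfalso
          have hv0 : v 0 i = f x0 i := by simp [hvdef, hinit]
          rw [← h] at hi0
          rw [hv0] at hi0
          have := hf0 i
          have hexp1 : Real.exp (C * 0) = 1 := by norm_num
          rw [hexp1] at hi0
          linarith
      have hbefore : ∀ s, 0 ≤ s → s < t₀ → ∀ j,
          0 < v s j + ε * Real.exp (C * s) := by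
        intro s hs hst j
        by_contra hns
        push_neg at hns
        have hsB : s ∈ B :=
          Set.mem_iUnion.2 ⟨j, ⟨hs, hst.le.trans ht₀I.2⟩, hns⟩
        exact absurd (csInf_le hBbdd hsB) (not_le.2 hst)
      have hge : ∀ j, 0 ≤ v t₀ j + ε * Real.exp (C * t₀) := by
        intro j
        have hcg : ContinuousAt (fun s => v s j + ε * Real.exp (C * s)) t₀ :=
          ((continuous_apply j).continuousAt.comp (hvcontAt t₀ ht₀I)).add (by fun_prop)
        refine ge_of_tendsto (hcg.tendsto.mono_left nhdsWithin_le_nhds :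
          Filter.Tendsto _ (nhdsWithin t₀ (Set.Iio t₀)) _) ?_
        filter_upwards [Ioo_mem_nhdsLT_of_mem ⟨ht₀pos, le_refl t₀⟩] with s hs
        exact (hbefore s hs.1.le hs.2 j).le
      have heq : v t₀ i + ε * Real.exp (C * t₀) = 0 := le_antisymm hi0 (hge i)
      have hvi : HasDerivAt (fun s => v s i) (f' (x t₀) (v t₀) i) t₀ :=
        hasDerivAt_pi.1 (hvderiv t₀ ht₀I) i
      have hexpd : HasDerivAt (fun s => ε * Real.exp (C * s))
          (ε * (Real.exp (C * t₀) * (C * 1))) t₀ :=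
        (((hasDerivAt_id t₀).const_mul C).exp).const_mul ε
      have hz : HasDerivAt (fun s => v s i + ε * Real.exp (C * s))
          (f' (x t₀) (v t₀) i + ε * (Real.exp (C * t₀) * (C * 1))) t₀ := hvi.add hexpd
      set E : ℝ := Real.exp (C * t₀) with hE
      have hEpos : 0 < E := Real.exp_pos _
      have hvle : ∀ j, -(ε * E) ≤ v t₀ j := fun j => by
        have := hge j; linarith
      have hvi_eq : v t₀ i = -(ε * E) := by linarith [heq]
      have hsum : f' (x t₀) (v t₀) i
          = ∑ j, v t₀ j * f' (x t₀) (Pi.single j 1) i := by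
        have hrepr : v t₀ = ∑ j, v t₀ j • (Pi.single j 1 : Fin n → ℝ) := by
          have := pi_eq_sum_univ (v t₀)
          convert this using 2 with j
          funext k
          simp [Pi.single_apply, eq_comm]
        conv_lhs => rw [hrepr]
        rw [map_sum]
        simp [Finset.sum_apply, ContinuousLinearMap.map_smul, smul_eq_mul]
      have hterm : ∀ j, -(ε * E * L) ≤ v t₀ j * f' (x t₀) (Pi.single j 1) i := by
        intro j
        have hA := hentry t₀ ht₀I i j
        rcases eq_or_ne j i with rfl | hji
        · rw [hvi_eq]
          have h1 : 0 ≤ ε * E := by positivity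
          have h2 : f' (x t₀) (Pi.single j 1) j ≤ L := (abs_le.1 hA).2
          nlinarith [mul_nonneg h1 (sub_nonneg.2 h2)]
        · have hA0 : 0 ≤ f' (x t₀) (Pi.single j 1) i :=
            hmetz _ (hinv t₀ ht₀I.1) i j (Ne.symm hji)
          have h1 : 0 ≤ v t₀ j + ε * E := by linarith [hvle j]
          have h2 : f' (x t₀) (Pi.single j 1) i ≤ L := (abs_le.1 hA).2
          have h3 : 0 ≤ ε * E := by positivity
          nlinarith [mul_nonneg h1 hA0, mul_nonneg h3 (sub_nonneg.2 h2)]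
      have hsum_ge : -((n : ℝ) * (ε * E * L)) ≤ f' (x t₀) (v t₀) i := by
        rw [hsum]
        have : ∑ j : Fin n, -(ε * E * L) ≤ ∑ j, v t₀ j * f' (x t₀) (Pi.single j 1) i :=
          Finset.sum_le_sum fun j _ => hterm j
        simpa using this
      have hdpos : 0 < f' (x t₀) (v t₀) i + ε * (Real.exp (C * t₀) * (C * 1)) := by
        rw [← hE]
        have hCE : ε * (E * (C * 1)) = (n : ℝ) * (ε * E * L) + ε * E := by
          rw [hC]; ring
        rw [hCE]
        have := mul_pos hε hEpos
        linarith
      have hslope := hasDerivAt_iff_tendsto_slope.1 hz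
      have hslope' : Filter.Tendsto
          (slope (fun s => v s i + ε * Real.exp (C * s)) t₀)
          (nhdsWithin t₀ (Set.Iio t₀))
          (nhds (f' (x t₀) (v t₀) i + ε * (Real.exp (C * t₀) * (C * 1)))) :=
        hslope.mono_left (nhdsWithin_mono _ (fun s hs => ne_of_lt hs))
      have hev : ∀ᶠ s in nhdsWithin t₀ (Set.Iio t₀),
          0 < slope (fun s => v s i + ε * Real.exp (C * s)) t₀ s :=
        hslope'.eventually_const_lt hdpos
      have hev2 : Set.Ioo 0 t₀ ∈ nhdsWithin t₀ (Set.Iio t₀) :=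
        Ioo_mem_nhdsLT_of_mem ⟨ht₀pos, le_refl t₀⟩
      obtain ⟨s, hs1, hs2⟩ :=
        (hev.and (Filter.eventually_of_mem hev2 (fun s hs => hs))).exists
      rw [slope_def_field] at hs1
      have hnum : v s i + ε * Real.exp (C * s) < 0 := by
        have hden : s - t₀ < 0 := by linarith [hs2.2]
        rcases div_pos_iff.1 hs1 with ⟨h1, h2⟩ | ⟨h1, h2⟩
        · linarith
        · have := heq; nlinarith [h1]
      exact absurd (hbefore s hs2.1.le hs2.2 i) (not_lt.2 hnum.le)
    intro i
    by_contra hneg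
    push_neg at hneg
    have hexpT : 0 < Real.exp (C * T) := Real.exp_pos _
    set ε : ℝ := -(f (x T) i) / (2 * Real.exp (C * T)) with hεdef
    have hεpos : 0 < ε := div_pos (by linarith) (by positivity)
    have hz := zpos ε hεpos T (Set.right_mem_Icc.2 hT) i
    have hεe : ε * Real.exp (C * T) = -(f (x T) i) / 2 := by
      rw [hεdef]; field_simp
    have hvT : v T i = f (x T) i := rfl
    rw [hvT, hεe] at hz
    linarith
  intro s t hs hst i
  have hmono : MonotoneOn (fun τ => x τ i) (Set.Ici 0) := by
    apply monotoneOn_of_deriv_nonneg (convex_Ici 0)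
    · intro τ hτ
      exact ((hasDerivAt_pi.1 (hsol τ hτ) i).continuousAt).continuousWithinAt
    · intro τ hτ
      rw [interior_Ici] at hτ
      exact ((hasDerivAt_pi.1 (hsol τ hτ.le) i)).differentiableAt.differentiableWithinAt
    · intro τ hτ
      rw [interior_Ici] at hτ
      rw [(hasDerivAt_pi.1 (hsol τ hτ.le) i).deriv]
      exact key τ hτ.le i
  exact hmono hs (hs.trans hst) hst
end

section
/- Let b, μ₁, μ₂, a > 0 with N := b/μ₁ > 1, Q := μ₁/μ₂, and 0 < a < a_crit := Q(√N − 1)². Then for the ODE x' = x(b·x/(x+a) − μ₁ − μ₂x), the two positive equilibria x₋ < x₊ satisfy: every solution with initial condition in [0, x₋) converges to 0, and every solution with initial condition in (x₋, ∞) converges to x₊. -/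
/-
Once the equilibria are known, Vieta's formulas factor the vector field as
`-μ₂ u (u - x₋)(u - x₊) / (u + a)` on `u ≥ 0`. Around each equilibrium `c` the equation is then
linear in `x - c` with a continuous coefficient, so `x t - c = (x 0 - c) · exp (∫ …)` and the side
of `c` on which the solution lies never changes. On each side the field has a constant sign, so the
solution is monotone and bounded and converges; its limit must be a zero of the field, since a
derivative tending to a nonzero limit would make the solution unbounded. Only one zero of the field
lies in the range available to the limit.
-/

open Filter Set Topology

section ScalarODE

variable {x F : ℝ → ℝ}

theorem eq_mul_exp_integral_of_hasDerivAt {y k : ℝ → ℝ} (hk : Continuous k)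
    (hy : ∀ t, 0 ≤ t → HasDerivAt y (k t * y t) t) {t : ℝ} (ht : 0 ≤ t) :
    y t = y 0 * Real.exp (∫ s in (0 : ℝ)..t, k s) := by
  set K : ℝ → ℝ := fun t => ∫ s in (0 : ℝ)..t, k s
  have hK : ∀ t, HasDerivAt K (k t) t := fun t => (hk.integral_hasStrictDerivAt 0 t).hasDerivAt
  have hconst : ∀ s ∈ Icc (0 : ℝ) t, y s * Real.exp (-K s) = y 0 * Real.exp (-K 0) := by
    have hderiv : ∀ s, 0 ≤ s → HasDerivAt (fun s => y s * Real.exp (-K s)) 0 s := fun s hs =>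
      ((hy s hs).mul (hK s).neg.exp).congr_deriv (by ring)
    refine constant_of_has_deriv_right_zero (fun s hs => ?_) (fun s hs => ?_)
    · exact (hderiv s hs.1).continuousAt.continuousWithinAt
    · exact (hderiv s hs.1).hasDerivWithinAt
  have h := hconst t ⟨ht, le_rfl⟩
  simp only [K, intervalIntegral.integral_same, neg_zero, Real.exp_zero, mul_one] at h
  rw [← h, mul_assoc, ← Real.exp_add, neg_add_cancel, Real.exp_zero, mul_one]

/-- The equation is linear in `x - c` with the continuous coefficient `h ∘ x`. -/
theorem sign_sub_eq_of_hasDerivAt {h : ℝ → ℝ} {c : ℝ} {s : Set ℝ} (hh : ContinuousOn h s)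
    (hF : ∀ u, F u = (u - c) * h u) (hxs : ∀ t, 0 ≤ t → x t ∈ s)
    (hx : ∀ t, 0 ≤ t → HasDerivAt x (F (x t)) t) {t : ℝ} (ht : 0 ≤ t) :
    SignType.sign (x t - c) = SignType.sign (x 0 - c) := by
  have hx_cont : Continuous fun t => x (max t 0) :=
    ContinuousOn.comp_continuous (fun t ht => (hx t ht).continuousAt.continuousWithinAt)
      (continuous_id.max continuous_const) fun t => le_max_right t 0
  have hk : Continuous fun t => h (x (max t 0)) :=
    hh.comp_continuous hx_cont fun t => hxs _ (le_max_right t 0)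
  have hy : ∀ t, 0 ≤ t → HasDerivAt (fun t => x t - c) (h (x (max t 0)) * (x t - c)) t :=
    fun t ht => ((hx t ht).sub_const c).congr_deriv (by rw [hF, max_eq_left ht, mul_comm])
  rw [eq_mul_exp_integral_of_hasDerivAt hk hy ht, sign_mul, sign_pos (Real.exp_pos _), mul_one]

theorem tendsto_atTop_of_hasDerivAt_of_tendsto_pos {v : ℝ → ℝ} {d : ℝ}
    (hx : ∀ᶠ t in atTop, HasDerivAt x (v t) t) (hv : Tendsto v atTop (𝓝 d)) (hd : 0 < d) :
    Tendsto x atTop atTop := by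
  obtain ⟨T, hT⟩ := (hx.and (hv.eventually_const_le (half_lt_self hd))).exists_forall_of_atTop
  have hmono : MonotoneOn (fun t => x t - d / 2 * t) (Ici T) := by
    have hderiv : ∀ t ∈ Ici T, HasDerivAt (fun t => x t - d / 2 * t) (v t - d / 2) t :=
      fun t ht => ((hT t ht).1.sub ((hasDerivAt_id t).const_mul (d / 2))).congr_deriv (by simp)
    refine monotoneOn_of_hasDerivWithinAt_nonneg (f' := fun t => v t - d / 2) (convex_Ici T)
      (fun t ht => (hderiv t ht).continuousAt.continuousWithinAt) (fun t ht => ?_) (fun t ht => ?_)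
    · exact (hderiv t (interior_subset ht)).hasDerivWithinAt
    · exact sub_nonneg.2 (hT t (interior_subset ht)).2
  have hlin : Tendsto (fun t => x T + d / 2 * (t - T)) atTop atTop :=
    tendsto_atTop_add_const_left _ _
      ((tendsto_atTop_add_const_right _ _ tendsto_id).const_mul_atTop (half_pos hd))
  refine tendsto_atTop_mono' _ ?_ hlin
  filter_upwards [eventually_ge_atTop T] with t ht
  have := hmono self_mem_Ici ht ht
  simp only at this
  linarith

theorem eq_zero_of_tendsto_of_hasDerivAt {v : ℝ → ℝ} {L d : ℝ}
    (hx : ∀ᶠ t in atTop, HasDerivAt x (v t) t) (hxL : Tendsto x atTop (𝓝 L))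
    (hv : Tendsto v atTop (𝓝 d)) : d = 0 := by
  rcases lt_trichotomy d 0 with hd | hd | hd
  · have hneg := tendsto_atTop_of_hasDerivAt_of_tendsto_pos
      (hx.mono fun t ht => ht.neg) hv.neg (neg_pos.2 hd)
    exact absurd hxL.neg (not_tendsto_nhds_of_tendsto_atTop hneg _)
  · exact hd
  · exact absurd hxL
      (not_tendsto_nhds_of_tendsto_atTop (tendsto_atTop_of_hasDerivAt_of_tendsto_pos hx hv hd) _)

theorem exists_tendsto_of_hasDerivAt_nonneg {M : ℝ}
    (hx : ∀ t, 0 ≤ t → HasDerivAt x (F (x t)) t) (hF : ContinuousOn F (Icc (x 0) M))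
    (hF₀ : ∀ t, 0 ≤ t → 0 ≤ F (x t)) (hM : ∀ t, 0 ≤ t → x t ≤ M) :
    ∃ L ∈ Icc (x 0) M, F L = 0 ∧ Tendsto x atTop (𝓝 L) := by
  have hmono : MonotoneOn x (Ici 0) :=
    monotoneOn_of_hasDerivWithinAt_nonneg (convex_Ici 0)
      (fun t ht => (hx t ht).continuousAt.continuousWithinAt)
      (fun t ht => (hx t (interior_subset ht)).hasDerivWithinAt)
      (fun t ht => hF₀ t (interior_subset ht))
  set y : ℝ → ℝ := fun t => x (max t 0)
  have hy : Monotone y := fun s t hst =>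
    hmono (le_max_right s 0) (le_max_right t 0) (max_le_max hst le_rfl)
  have hyM : BddAbove (range y) := ⟨M, by rintro _ ⟨t, rfl⟩; exact hM _ (le_max_right t 0)⟩
  have hxy : y =ᶠ[atTop] x := by
    filter_upwards [eventually_ge_atTop 0] with t ht
    simp only [y, max_eq_left ht]
  have hL : Tendsto x atTop (𝓝 (⨆ t, y t)) := (tendsto_atTop_ciSup hy hyM).congr' hxy
  have hxI : ∀ t, 0 ≤ t → x t ∈ Icc (x 0) M := fun t ht =>
    ⟨hmono self_mem_Ici ht ht, hM t ht⟩
  have hLI : (⨆ t, y t) ∈ Icc (x 0) M :=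
    isClosed_Icc.mem_of_tendsto hL (eventually_atTop.2 ⟨0, hxI⟩)
  have hFx : Tendsto (fun t => F (x t)) atTop (𝓝 (F (⨆ t, y t))) :=
    (hF _ hLI).tendsto.comp
      (tendsto_nhdsWithin_iff.2 ⟨hL, eventually_atTop.2 ⟨0, hxI⟩⟩)
  exact ⟨_, hLI, eq_zero_of_tendsto_of_hasDerivAt (eventually_atTop.2 ⟨0, hx⟩) hL hFx, hL⟩

theorem exists_tendsto_of_hasDerivAt_nonpos {m : ℝ}
    (hx : ∀ t, 0 ≤ t → HasDerivAt x (F (x t)) t) (hF : ContinuousOn F (Icc m (x 0)))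
    (hF₀ : ∀ t, 0 ≤ t → F (x t) ≤ 0) (hm : ∀ t, 0 ≤ t → m ≤ x t) :
    ∃ L ∈ Icc m (x 0), F L = 0 ∧ Tendsto x atTop (𝓝 L) := by
  have hFneg : ContinuousOn (fun u => -F (-u)) (Icc (-x 0) (-m)) :=
    (hF.comp continuousOn_neg fun u hu => ⟨le_neg.1 hu.2, neg_le.1 hu.1⟩).neg
  obtain ⟨L, hLI, hFL, hL⟩ := exists_tendsto_of_hasDerivAt_nonneg (x := fun t => -x t)
    (fun t ht => (hx t ht).neg.congr_deriv (by simp)) hFneg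
    (fun t ht => by simpa using hF₀ t ht) (fun t ht => neg_le_neg (hm t ht))
  refine ⟨-L, ⟨le_neg.2 hLI.2, neg_le.1 hLI.1⟩, by simpa using hFL, ?_⟩
  simpa using hL.neg

end ScalarODE

theorem quadratic_eq_mul_sub_mul_sub {p q r x y : ℝ} (hx : p * x ^ 2 + q * x + r = 0)
    (hy : p * y ^ 2 + q * y + r = 0) (hxy : x ≠ y) (u : ℝ) :
    p * u ^ 2 + q * u + r = p * (u - x) * (u - y) := by
  have hsum : p * (x + y) + q = 0 :=
    (mul_eq_zero.1 (by linear_combination hx - hy : (x - y) * (p * (x + y) + q) = 0)).resolve_left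
      (sub_ne_zero.2 hxy)
  linear_combination (u - x) * hsum + hx

/-- The Allee vector field `x (b x / (x + a) - μ₁ - μ₂ x)`, written through its positive zeros. -/
noncomputable def alleeField (μ2 a xm xp u : ℝ) : ℝ :=
  -(μ2 * u * (u - xm) * (u - xp)) / (u + a)

section AlleeField

variable {μ2 a xm xp : ℝ}

theorem continuousOn_alleeField (ha : 0 < a) : ContinuousOn (alleeField μ2 a xm xp) (Ici 0) :=
  ContinuousOn.div (by fun_prop) (by fun_prop) fun u hu => (add_pos_of_nonneg_of_pos hu ha).ne'

theorem alleeField_eq_zero_iff {u : ℝ} (hμ2 : μ2 ≠ 0) (hu : u + a ≠ 0) :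
    alleeField μ2 a xm xp u = 0 ↔ u = 0 ∨ u = xm ∨ u = xp := by
  simp [alleeField, hμ2, hu, sub_eq_zero, or_assoc]

theorem alleeField_nonneg {u : ℝ} (hμ2 : 0 ≤ μ2) (hu : 0 ≤ u) (ha : 0 < a)
    (h : (u - xm) * (u - xp) ≤ 0) : 0 ≤ alleeField μ2 a xm xp u := by
  refine div_nonneg ?_ (by positivity)
  nlinarith [mul_nonneg hμ2 hu]

theorem alleeField_nonpos {u : ℝ} (hμ2 : 0 ≤ μ2) (hu : 0 ≤ u) (ha : 0 < a)
    (h : 0 ≤ (u - xm) * (u - xp)) : alleeField μ2 a xm xp u ≤ 0 := by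
  refine div_nonpos_of_nonpos_of_nonneg ?_ (by positivity)
  nlinarith [mul_nonneg hμ2 hu]

variable {x : ℝ → ℝ}

theorem sign_sub_eq_of_hasDerivAt_alleeField {c : ℝ} (hc : c = xm ∨ c = xp) (ha : 0 < a)
    (hnn : ∀ t, 0 ≤ t → 0 ≤ x t)
    (hx : ∀ t, 0 ≤ t → HasDerivAt x (alleeField μ2 a xm xp (x t)) t)
    {t : ℝ} (ht : 0 ≤ t) : SignType.sign (x t - c) = SignType.sign (x 0 - c) := by
  have hcont : ∀ r, ContinuousOn (fun u => -(μ2 * u * (u - r)) / (u + a)) (Ici 0) := fun r =>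
    ContinuousOn.div (by fun_prop) (by fun_prop) fun u hu => (add_pos_of_nonneg_of_pos hu ha).ne'
  rcases hc with rfl | rfl
  · exact sign_sub_eq_of_hasDerivAt (hcont xp) (fun u => by simp only [alleeField]; ring) hnn hx ht
  · exact sign_sub_eq_of_hasDerivAt (hcont xm) (fun u => by simp only [alleeField]; ring) hnn hx ht

theorem le_of_hasDerivAt_alleeField {c : ℝ} (hc : c = xm ∨ c = xp) (ha : 0 < a)
    (hnn : ∀ t, 0 ≤ t → 0 ≤ x t)
    (hx : ∀ t, 0 ≤ t → HasDerivAt x (alleeField μ2 a xm xp (x t)) t)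
    (h0 : x 0 ≤ c) {t : ℝ} (ht : 0 ≤ t) : x t ≤ c := by
  have h := sign_sub_eq_of_hasDerivAt_alleeField hc ha hnn hx ht
  rw [← sub_nonpos, ← sign_nonpos_iff, h, sign_nonpos_iff, sub_nonpos]
  exact h0

theorem ge_of_hasDerivAt_alleeField {c : ℝ} (hc : c = xm ∨ c = xp) (ha : 0 < a)
    (hnn : ∀ t, 0 ≤ t → 0 ≤ x t)
    (hx : ∀ t, 0 ≤ t → HasDerivAt x (alleeField μ2 a xm xp (x t)) t)
    (h0 : c ≤ x 0) {t : ℝ} (ht : 0 ≤ t) : c ≤ x t := by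
  have h := sign_sub_eq_of_hasDerivAt_alleeField hc ha hnn hx ht
  rw [← sub_nonneg, ← sign_nonneg_iff, h, sign_nonneg_iff, sub_nonneg]
  exact h0

theorem tendsto_zero_of_hasDerivAt_alleeField (hμ2 : 0 < μ2) (ha : 0 < a) (hlt : xm < xp)
    (hnn : ∀ t, 0 ≤ t → 0 ≤ x t)
    (hx : ∀ t, 0 ≤ t → HasDerivAt x (alleeField μ2 a xm xp (x t)) t)
    (h0 : x 0 < xm) : Tendsto x atTop (𝓝 0) := by
  have hbelow t (ht : 0 ≤ t) : x t ≤ xm :=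
    le_of_hasDerivAt_alleeField (.inl rfl) ha hnn hx h0.le ht
  obtain ⟨L, hLI, hFL, hL⟩ := exists_tendsto_of_hasDerivAt_nonpos hx
    ((continuousOn_alleeField ha).mono fun u hu => hu.1) (fun t ht => alleeField_nonpos hμ2.le
      (hnn t ht) ha (mul_nonneg_of_nonpos_of_nonpos (by linarith [hbelow t ht])
        (by linarith [hbelow t ht]))) hnn
  have hL0 : L = 0 := by
    rcases (alleeField_eq_zero_iff hμ2.ne' (by linarith [hLI.1])).1 hFL with h | h | h <;>
      linarith [hLI.2]
  exact hL0 ▸ hL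

theorem tendsto_xp_of_hasDerivAt_alleeField (hμ2 : 0 < μ2) (ha : 0 < a) (hxm : 0 < xm)
    (hlt : xm < xp) (hnn : ∀ t, 0 ≤ t → 0 ≤ x t)
    (hx : ∀ t, 0 ≤ t → HasDerivAt x (alleeField μ2 a xm xp (x t)) t) (h0 : xm < x 0) :
    Tendsto x atTop (𝓝 xp) := by
  have habove t (ht : 0 ≤ t) : xm ≤ x t :=
    ge_of_hasDerivAt_alleeField (.inl rfl) ha hnn hx h0.le ht
  rcases le_total (x 0) xp with h0p | hp0
  · have hbelow t (ht : 0 ≤ t) : x t ≤ xp :=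
      le_of_hasDerivAt_alleeField (.inr rfl) ha hnn hx h0p ht
    obtain ⟨L, hLI, hFL, hL⟩ := exists_tendsto_of_hasDerivAt_nonneg hx
      ((continuousOn_alleeField ha).mono fun u hu => (hnn 0 le_rfl).trans hu.1)
      (fun t ht => alleeField_nonneg hμ2.le (hnn t ht) ha (mul_nonpos_of_nonneg_of_nonpos
        (by linarith [habove t ht]) (by linarith [hbelow t ht]))) hbelow
    have hLp : L = xp := by
      rcases (alleeField_eq_zero_iff hμ2.ne' (by linarith [hLI.1, hnn 0 le_rfl])).1 hFL
        with h | h | h <;> linarith [hLI.1]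
    exact hLp ▸ hL
  · have habove' t (ht : 0 ≤ t) : xp ≤ x t :=
      ge_of_hasDerivAt_alleeField (.inr rfl) ha hnn hx hp0 ht
    obtain ⟨L, hLI, hFL, hL⟩ := exists_tendsto_of_hasDerivAt_nonpos hx
      ((continuousOn_alleeField ha).mono fun u hu => (hxm.trans hlt).le.trans hu.1)
      (fun t ht => alleeField_nonpos hμ2.le (hnn t ht) ha (mul_nonneg
        (by linarith [habove t ht]) (by linarith [habove' t ht]))) habove'
    have hLp : L = xp := by
      rcases (alleeField_eq_zero_iff hμ2.ne' (by linarith [hLI.1])).1 hFL with h | h | h <;>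
        linarith [hLI.1]
    exact hLp ▸ hL

end AlleeField

theorem stmt18_general (b μ1 μ2 a : ℝ) (hμ1 : 0 < μ1) (hμ2 : 0 < μ2) (ha : 0 < a)
    (xm xp : ℝ) (hxm : 0 < xm) (hlt : xm < xp)
    (hrm : xm ^ 2 / (μ1 / μ2) + (a / (μ1 / μ2) + 1 - b / μ1) * xm + a = 0)
    (hrp : xp ^ 2 / (μ1 / μ2) + (a / (μ1 / μ2) + 1 - b / μ1) * xp + a = 0)
    (x : ℝ → ℝ) (hnn : ∀ t, 0 ≤ t → 0 ≤ x t)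
    (hsol : ∀ t, 0 ≤ t → HasDerivAt x (x t * (b * x t / (x t + a) - μ1 - μ2 * x t)) t) :
    (x 0 < xm → Filter.Tendsto x Filter.atTop (nhds 0)) ∧
    (xm < x 0 → Filter.Tendsto x Filter.atTop (nhds xp)) := by
  have hroot : ∀ r, r ^ 2 / (μ1 / μ2) + (a / (μ1 / μ2) + 1 - b / μ1) * r + a = 0 →
      μ2 * r ^ 2 + (a * μ2 + μ1 - b) * r + a * μ1 = 0 := by
    intro r hr
    field_simp at hr
    linear_combination hr
  have hfield : ∀ u, 0 ≤ u →
      u * (b * u / (u + a) - μ1 - μ2 * u) = alleeField μ2 a xm xp u := by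
    intro u hu
    have hvieta := quadratic_eq_mul_sub_mul_sub (hroot xm hrm) (hroot xp hrp) hlt.ne u
    have hua : u + a ≠ 0 := by positivity
    rw [alleeField]
    field_simp
    linear_combination -u * hvieta
  have hx : ∀ t, 0 ≤ t → HasDerivAt x (alleeField μ2 a xm xp (x t)) t := fun t ht =>
    hfield (x t) (hnn t ht) ▸ hsol t ht
  exact ⟨tendsto_zero_of_hasDerivAt_alleeField hμ2 ha hlt hnn hx,
    tendsto_xp_of_hasDerivAt_alleeField hμ2 ha hxm hlt hnn hx⟩

/-- Basins of attraction for the scalar Allee-effect ODE when `0 < a < a_crit`: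
solutions starting below the smaller positive equilibrium `x₋` converge to `0`,
those starting above `x₋` converge to the larger equilibrium `x₊`. -/
theorem stmt18 (b μ1 μ2 a : ℝ) (hb : 0 < b) (hμ1 : 0 < μ1) (hμ2 : 0 < μ2) (ha : 0 < a)
    (hN : 1 < b / μ1) (hacrit : a < (μ1 / μ2) * (Real.sqrt (b / μ1) - 1) ^ 2)
    (xm xp : ℝ) (hxm : 0 < xm) (hlt : xm < xp)
    (hrm : xm ^ 2 / (μ1 / μ2) + (a / (μ1 / μ2) + 1 - b / μ1) * xm + a = 0)
    (hrp : xp ^ 2 / (μ1 / μ2) + (a / (μ1 / μ2) + 1 - b / μ1) * xp + a = 0)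
    (x : ℝ → ℝ) (hnn : ∀ t, 0 ≤ t → 0 ≤ x t)
    (hsol : ∀ t, 0 ≤ t → HasDerivAt x (x t * (b * x t / (x t + a) - μ1 - μ2 * x t)) t) :
    (x 0 < xm → Filter.Tendsto x Filter.atTop (nhds 0)) ∧
    (xm < x 0 → Filter.Tendsto x Filter.atTop (nhds xp)) :=
  stmt18_general b μ1 μ2 a hμ1 hμ2 ha xm xp hxm hlt hrm hrp x hnn hsol
end
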